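/- arXiv:1310.4906 — 10 statements merged into one kernel-verified Lean document; each statement's English description precedes it below -/
import Mathlib

section
/- For any dynamic graph G = (V, E) on n nodes in which the communication graph G(r) is connected in every round r, and any node u ∈ V, the number of nodes v such that (u,0) causally influences (v,r) is at least min{r+1, n}. -/
/-- One step of the causal (influence) relation in a dynamic graph:
`(u, r) → (v, r+1)` iff `u = v` or `{u,v} ∈ E(r+1)`. -/
def oneStep {V : Type*} (E : ℕ → SimpleGraph V) : V × ℕ → V × ℕ → Prop :=
  fun p q => q.2 = p.2 + 1 ∧ (p.1 = q.1 ∨ (E q.2).Adj p.1 q.1)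

/-- The causal order `(u, r) ⇝ (v, r')`: reflexive-transitive closure of `oneStep`. -/
def causal {V : Type*} (E : ℕ → SimpleGraph V) : V × ℕ → V × ℕ → Prop :=
  Relation.ReflTransGen (oneStep E)

/-- A walk from inside `S` to outside `S` crosses the boundary. -/
lemma crossing_edge {V : Type*} (G : SimpleGraph V) (S : Set V) {a b : V}
    (h : G.Reachable a b) (ha : a ∈ S) (hb : b ∉ S) :
    ∃ x ∈ S, ∃ y, y ∉ S ∧ G.Adj x y := by
  obtain ⟨w⟩ := h
  induction w with
  | nil => exact absurd ha hb
  | @cons c d e hcd p ih =>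
    by_cases hd : d ∈ S
    · exact ih hd hb
    · exact ⟨c, ha, d, hd, hcd⟩

/-- In a dynamic graph on `n` nodes whose communication graph is connected in
every round, every node `u` causally influences at least `min (r+1) n` nodes by round `r`. -/
theorem forward_influence_lower_bound {V : Type*} [Fintype V]
    (E : ℕ → SimpleGraph V) (hconn : ∀ r, 1 ≤ r → (E r).Connected)
    (u : V) (r : ℕ) :
    min (r + 1) (Fintype.card V) ≤ {v : V | causal E (u, 0) (v, r)}.ncard := by
  let S : ℕ → Set V := fun r => {v : V | causal E (u, 0) (v, r)}
  have hu : ∀ r, u ∈ S r := by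
    intro r
    induction r with
    | zero => exact Relation.ReflTransGen.refl
    | succ k ih => exact Relation.ReflTransGen.tail ih ⟨rfl, Or.inl rfl⟩
  have hmono : ∀ r, S r ⊆ S (r + 1) := by
    intro r v hv
    exact Relation.ReflTransGen.tail hv ⟨rfl, Or.inl rfl⟩
  have key : ∀ r, min (r + 1) (Fintype.card V) ≤ (S r).ncard := by
    intro r
    induction r with
    | zero =>
      have h1 : 0 < (S 0).ncard := (Set.ncard_pos (Set.toFinite _)).mpr ⟨u, hu 0⟩
      omega
    | succ k ih =>
      by_cases hfull : S k = Set.univ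
      · have hsub : S (k+1) = Set.univ := Set.eq_univ_of_univ_subset (hfull ▸ hmono k)
        have : (S (k+1)).ncard = Fintype.card V := by
          rw [hsub, Set.ncard_univ, Nat.card_eq_fintype_card]
        omega
      · obtain ⟨b, hb⟩ : ∃ b, b ∉ S k := by
          by_contra h
          push_neg at h
          exact hfull (Set.eq_univ_of_forall h)
        obtain ⟨x, hx, y, hy, hxy⟩ :=
          crossing_edge (E (k+1)) (S k) ((hconn (k+1) (by omega)).preconnected u b) (hu k) hb
        have hyS : y ∈ S (k+1) := Relation.ReflTransGen.tail hx ⟨rfl, Or.inr hxy⟩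
        have hss : S k ⊂ S (k+1) := ⟨hmono k, fun h => hy (h hyS)⟩
        have hlt : (S k).ncard < (S (k+1)).ncard := Set.ncard_lt_ncard hss (Set.toFinite _)
        omega
  exact key r
end

section
/- For any dynamic graph G = (V, E) on n nodes that is connected in every round, and any node u ∈ V, the number of nodes v such that (v,0) causally influences (u,r) is at least min{r+1, n}. -/
lemma causal_self {V : Type*} (E : ℕ → SimpleGraph V) (u : V) (d s : ℕ) :
    causal E (u, s) (u, s + d) := by
  induction d with
  | zero => exact Relation.ReflTransGen.refl
  | succ d ih => exact ih.tail ⟨rfl, Or.inl rfl⟩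

/-- In a dynamic graph on `n` nodes whose communication graph is connected in
every round, every node `u` is causally influenced by at least `min (r+1) n`
nodes by round `r`. -/
theorem backward_influence_lower_bound {V : Type*} [Fintype V]
    (E : ℕ → SimpleGraph V) (hconn : ∀ r, 1 ≤ r → (E r).Connected)
    (u : V) (r : ℕ) :
    min (r + 1) (Fintype.card V) ≤ {v : V | causal E (v, 0) (u, r)}.ncard := by
  classical
  have key : ∀ k, k ≤ r →
      min (k + 1) (Fintype.card V) ≤ {v : V | causal E (v, r - k) (u, r)}.ncard := by
    intro k
    induction k with
    | zero =>
      intro _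
      have hu : u ∈ {v : V | causal E (v, r - 0) (u, r)} := by
        simpa using causal_self E u 0 r
      have h1 : 1 ≤ {v : V | causal E (v, r - 0) (u, r)}.ncard :=
        (Set.Nonempty.ncard_pos (Set.toFinite _) ⟨u, hu⟩)
      have hcard : 1 ≤ Fintype.card V := Fintype.card_pos_iff.mpr ⟨u⟩
      omega
    | succ k ih =>
      intro hk
      set t := r - (k + 1) with ht'
      have ht : r - k = t + 1 := by omega
      set A := {v : V | causal E (v, t + 1) (u, r)} with hA
      set B := {v : V | causal E (v, t) (u, r)} with hB
      have hAB : A ⊆ B := by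
        intro v hv
        exact Relation.ReflTransGen.head (b := (v, t + 1)) ⟨rfl, Or.inl rfl⟩ hv
      have hABcard : A.ncard ≤ B.ncard := Set.ncard_le_ncard hAB (Set.toFinite _)
      have ihA : min (k + 1) (Fintype.card V) ≤ A.ncard := by
        have := ih (by omega)
        rwa [ht] at this
      by_cases hfull : Fintype.card V ≤ A.ncard
      · have : min (k + 1 + 1) (Fintype.card V) ≤ Fintype.card V := min_le_right _ _
        omega
      · -- A is not all of V
        have huA : u ∈ A := by
          have : causal E (u, t + 1) (u, (t + 1) + (r - (t + 1))) :=
            causal_self E u (r - (t + 1)) (t + 1)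
          have hr : (t + 1) + (r - (t + 1)) = r := by omega
          rwa [hr] at this
        have hne : A ≠ Set.univ := by
          intro h
          rw [h, Set.ncard_univ, Nat.card_eq_fintype_card] at hfull
          exact hfull le_rfl
        obtain ⟨b, hb⟩ : ∃ b, b ∉ A := by
          by_contra h
          push_neg at h
          exact hne (Set.eq_univ_of_forall h)
        have hconn' := hconn (t + 1) (Nat.le_add_left 1 t)
        obtain ⟨p⟩ := hconn'.preconnected u b
        obtain ⟨d, _, hdA, hdnA⟩ := p.exists_boundary_dart A huA hb
        have hwB : d.snd ∈ B := by
          refine Relation.ReflTransGen.head ⟨rfl, Or.inr ?_⟩ hdA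
          exact d.adj.symm
        have hins : insert d.snd A ⊆ B := by
          intro x hx
          rcases hx with rfl | hx
          · exact hwB
          · exact hAB hx
        have hcard : A.ncard + 1 ≤ B.ncard := by
          have := Set.ncard_le_ncard hins (Set.toFinite _)
          rwa [Set.ncard_insert_of_notMem hdnA (Set.toFinite _)] at this
        omega
  have := key r le_rfl
  simpa using this
end

section
/- In a dynamic graph on n ≥ 2 nodes that is connected in every round, any token-forwarding process in which exactly one node holds a token in each round and may pass it to one neighbor, and in which the token is not replicated, can be prevented by an adaptive adversary from ever reaching a fixed target node: there exists an adversarial choice of connected graphs G(r) such that for all rounds r the token never resides at the target node, provided n ≥ 3. -/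
/-!
The forwarding strategy `σ` is deterministic, so the adversary can compute the holder's whole
trajectory in advance. In each round it offers the complete graph minus the single edge between
the current holder and `v`: with at least three nodes this graph is still connected (any third
node is adjacent to everything), yet the holder cannot pass the token to `v`, and keeping the
token or passing it elsewhere keeps it off `v`.
-/

lemma exists_ne_ne_of_three_le_card {V : Type*} [Fintype V] (hn : 3 ≤ Fintype.card V)
    (p q : V) : ∃ u, u ≠ p ∧ u ≠ q := by
  classical
  have hlt : ({p, q} : Finset V).card < (Finset.univ : Finset V).card :=
    Finset.card_le_two.trans_lt (by rw [Finset.card_univ]; omega)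
  obtain ⟨u, -, hu⟩ := Finset.exists_mem_notMem_of_card_lt_card hlt
  simp only [Finset.mem_insert, Finset.mem_singleton, not_or] at hu
  exact ⟨u, hu⟩

lemma adj_top_deleteEdges_pair {V : Type*} {p q a b : V} :
    ((⊤ : SimpleGraph V).deleteEdges {s(p, q)}).Adj a b ↔ a ≠ b ∧ s(a, b) ≠ s(p, q) := by
  simp

lemma isUniversal_top_deleteEdges_pair {V : Type*} {p q u : V} (hp : u ≠ p) (hq : u ≠ q) :
    ((⊤ : SimpleGraph V).deleteEdges {s(p, q)}).IsUniversal u := by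
  intro z hz
  refine adj_top_deleteEdges_pair.2 ⟨hz, fun h => ?_⟩
  rcases Sym2.eq_iff.1 h with ⟨h, -⟩ | ⟨h, -⟩
  exacts [hp h, hq h]

lemma connected_top_deleteEdges_pair {V : Type*} [Fintype V] (hn : 3 ≤ Fintype.card V)
    (p q : V) : ((⊤ : SimpleGraph V).deleteEdges {s(p, q)}).Connected :=
  let ⟨_, hp, hq⟩ := exists_ne_ne_of_three_le_card hn p q
  .of_isUniversal (isUniversal_top_deleteEdges_pair hp hq)

lemma eq_ite_of_forward_top_deleteEdges {V : Type*} [DecidableEq V] {p v y p' : V}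
    (hmove : ((⊤ : SimpleGraph V).deleteEdges {s(p, v)}).Adj p y → p' = y)
    (hkeep : ¬ ((⊤ : SimpleGraph V).deleteEdges {s(p, v)}).Adj p y → p' = p) :
    p' = if y = v then p else y := by
  by_cases hyv : y = v
  · rw [if_pos hyv]
    exact hkeep (by simp [hyv])
  · rw [if_neg hyv]
    by_cases hpy : p = y
    · subst hpy
      exact hkeep (by simp)
    · exact hmove (adj_top_deleteEdges_pair.2 ⟨hpy, fun h => hyv (Sym2.congr_right.1 h)⟩)

section Trajectory

variable {V : Type*} [DecidableEq V]

/-- The holder's positions when the edge from the holder to `v` is cut in every round. -/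
def avoidingTrajectory (σ : ℕ → V → V) (w v : V) : ℕ → V
  | 0 => w
  | r + 1 =>
    let p := avoidingTrajectory σ w v r
    if σ r p = v then p else σ r p

lemma avoidingTrajectory_ne (σ : ℕ → V → V) {w v : V} (hvw : v ≠ w) (r : ℕ) :
    avoidingTrajectory σ w v r ≠ v := by
  induction r with
  | zero => exact hvw.symm
  | succ r ih =>
    simp only [avoidingTrajectory]
    split_ifs with h
    exacts [ih, h]

end Trajectory

/-- Impossibility of unreplicated token forwarding against an adaptive adversary:
on `n ≥ 3` nodes, for any forwarding strategy `σ` (giving the node to which the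
current holder would forward the token), there is an adversarial choice of
connected communication graphs such that the token, starting at `w` and in each
round either passed to the intended neighbor (if the adversary provided that edge)
or kept, never reaches the target node `v`. -/
theorem token_forwarding_impossible {V : Type*} [Fintype V]
    (hn : 3 ≤ Fintype.card V) (w v : V) (hvw : v ≠ w)
    (σ : ℕ → V → V) :
    ∃ G : ℕ → SimpleGraph V, (∀ r, (G r).Connected) ∧
      ∀ x : ℕ → V, x 0 = w →
        (∀ r, ((G (r + 1)).Adj (x r) (σ r (x r)) → x (r + 1) = σ r (x r)) ∧
              (¬ (G (r + 1)).Adj (x r) (σ r (x r)) → x (r + 1) = x r)) →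
        ∀ r, x r ≠ v := by
  classical
  refine ⟨fun r => (⊤ : SimpleGraph V).deleteEdges {s(avoidingTrajectory σ w v r.pred, v)},
    fun r => connected_top_deleteEdges_pair hn _ _, fun x hx0 hstep => ?_⟩
  have hx : ∀ r, x r = avoidingTrajectory σ w v r := by
    intro r
    induction r with
    | zero => exact hx0
    | succ r ih =>
      obtain ⟨hmove, hkeep⟩ := hstep r
      rw [ih] at hmove hkeep
      exact eq_ite_of_forward_top_deleteEdges hmove hkeep
  intro r
  rw [hx r]
  exact avoidingTrajectory_ne σ hvw r
end

section
/- In a dynamic graph on n nodes that is connected in every round, if in every round each node broadcasts the minimum (with respect to a fixed total order) of the set of tokens it currently knows, and nodes accumulate all tokens they receive, then after n−1 rounds every node knows the globally minimum token. -/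
/-- In a graph, a walk from a vertex in `S` to a vertex outside `S` crosses an edge. -/
lemma exists_cross_edge {V : Type*} {G : SimpleGraph V} {S : Finset V} :
    ∀ {u v : V}, G.Walk u v → u ∈ S → v ∉ S →
      ∃ a ∈ S, ∃ b, b ∉ S ∧ G.Adj a b := by
  intro u v p
  induction p with
  | nil => intro hu hv; exact absurd hu hv
  | @cons a b c h p ih =>
    intro hu hv
    by_cases hb : b ∈ S
    · exact ih hb hv
    · exact ⟨a, hu, b, hb, h⟩

/-- Broadcast-the-minimum protocol in a dynamic graph on `n` nodes that is connected in
every round: each node broadcasts the minimum token it knows, and accumulates all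
received tokens.  After `n - 1` rounds every node knows the globally minimum token `m`. -/
theorem broadcast_min_completes {V τ : Type*} [Fintype V] [LinearOrder τ]
    (E : ℕ → SimpleGraph V) [∀ r, DecidableRel (E r).Adj]
    (hconn : ∀ r, (E r).Connected)
    (T : ℕ → V → Finset τ)
    (hT : ∀ r v, T (r + 1) v = T r v ∪
      (Finset.univ.filter fun w => (E (r + 1)).Adj w v).biUnion
        (fun w => if h : (T r w).Nonempty then {(T r w).min' h} else ∅))
    (m : τ) (hm : ∃ v, m ∈ T 0 v) (hmin : ∀ v, ∀ t ∈ T 0 v, m ≤ t) :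
    ∀ v, m ∈ T (Fintype.card V - 1) v := by
  classical
  -- m is a lower bound of all token sets in all rounds
  have hle : ∀ r v, ∀ t ∈ T r v, m ≤ t := by
    intro r
    induction r with
    | zero => exact hmin
    | succ r ih =>
      intro v t ht
      rw [hT] at ht
      rcases Finset.mem_union.mp ht with h | h
      · exact ih v t h
      · obtain ⟨w, hw, hmem⟩ := Finset.mem_biUnion.mp h
        split_ifs at hmem with hne
        · rw [Finset.mem_singleton] at hmem
          subst hmem
          exact ih w _ (Finset.min'_mem _ _)
        · simp at hmem
  -- the set of nodes knowing m
  set S : ℕ → Finset V := fun r => Finset.univ.filter (fun v => m ∈ T r v) with hS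
  have hmemS : ∀ r v, v ∈ S r ↔ m ∈ T r v := by
    intro r v; simp [hS]
  have hmono : ∀ r, S r ⊆ S (r + 1) := by
    intro r v hv
    rw [hmemS] at *
    rw [hT]
    exact Finset.mem_union_left _ hv
  -- spread along edges
  have hspread : ∀ r w v, w ∈ S r → (E (r + 1)).Adj w v → v ∈ S (r + 1) := by
    intro r w v hw hadj
    rw [hmemS] at *
    rw [hT]
    apply Finset.mem_union_right
    apply Finset.mem_biUnion.mpr
    refine ⟨w, by simp [hadj], ?_⟩
    have hne : (T r w).Nonempty := ⟨m, hw⟩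
    rw [dif_pos hne, Finset.mem_singleton]
    exact le_antisymm (hle r w _ (Finset.min'_mem _ _)) (Finset.min'_le _ _ hw)
  have hn1 : 1 ≤ Fintype.card V := by
    obtain ⟨v, _⟩ := hm
    exact Fintype.card_pos_iff.mpr ⟨v⟩
  have hS0ne : (S 0).Nonempty := by
    obtain ⟨v, hv⟩ := hm
    exact ⟨v, (hmemS 0 v).mpr hv⟩
  have hSmono0 : ∀ r, S 0 ⊆ S r := by
    intro r
    induction r with
    | zero => exact Finset.Subset.refl _
    | succ r ih => exact ih.trans (hmono r)
  -- growth of S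
  have hcard : ∀ r, min (r + 1) (Fintype.card V) ≤ (S r).card := by
    intro r
    induction r with
    | zero =>
      obtain ⟨v, hv⟩ := hm
      have : v ∈ S 0 := (hmemS 0 v).mpr hv
      calc min 1 (Fintype.card V) ≤ 1 := min_le_left _ _
        _ ≤ (S 0).card := Finset.card_pos.mpr ⟨v, this⟩
    | succ r ih =>
      by_cases hfull : S r = Finset.univ
      · have h2 : S (r + 1) = Finset.univ :=
          Finset.univ_subset_iff.mp (hfull ▸ hmono r)
        rw [h2, Finset.card_univ]
        exact min_le_right _ _
      · -- there is a vertex outside S r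
        obtain ⟨b0, hb0⟩ : ∃ b, b ∉ S r := by
          by_contra h
          push_neg at h
          exact hfull (Finset.eq_univ_iff_forall.mpr h)
        have hne : (S r).Nonempty :=
          Finset.Nonempty.mono (hSmono0 r) hS0ne
        obtain ⟨a, ha⟩ := hne
        obtain ⟨p⟩ := (hconn (r + 1)).preconnected a b0
        obtain ⟨x, hx, y, hy, hadj⟩ := exists_cross_edge p ha hb0
        have hy1 : y ∈ S (r + 1) := hspread r x y hx hadj
        have hsub : insert y (S r) ⊆ S (r + 1) := by
          intro z hz
          rcases Finset.mem_insert.mp hz with rfl | hz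
          · exact hy1
          · exact hmono r hz
        have hc1 : (S r).card + 1 ≤ (S (r + 1)).card := by
          have := Finset.card_le_card hsub
          rwa [Finset.card_insert_of_notMem hy] at this
        omega
  -- conclude
  intro v
  have := hcard (Fintype.card V - 1)
  rw [Nat.sub_add_cancel hn1, min_self] at this
  have : S (Fintype.card V - 1) = Finset.univ :=
    Finset.eq_univ_of_card _ (le_antisymm (Finset.card_le_univ _) this)
  rw [← hmemS]
  rw [this]
  exact Finset.mem_univ v
end

section
/- The set of nodes knowing the minimum token grows by at least one per round: in a dynamic graph on n nodes connected in every round, with the broadcast-the-minimum protocol, if K(r) denotes the set of nodes that know the globally minimum token at round r and K(r) ≠ V, then |K(r+1)| ≥ |K(r)| + 1. -/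
/-- In the broadcast-the-minimum protocol on a dynamic graph that is connected in every
round, the set `K r` of nodes knowing the globally minimum token `m` grows by at least
one node per round as long as `K r ≠ V`. -/
theorem knowers_of_min_grow {V τ : Type*} [Fintype V] [LinearOrder τ]
    (E : ℕ → SimpleGraph V) [∀ r, DecidableRel (E r).Adj]
    (hconn : ∀ r, (E r).Connected)
    (T : ℕ → V → Finset τ)
    (hT : ∀ r v, T (r + 1) v = T r v ∪
      (Finset.univ.filter fun w => (E (r + 1)).Adj w v).biUnion
        (fun w => if h : (T r w).Nonempty then {(T r w).min' h} else ∅))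
    (m : τ) (hm : ∃ v, m ∈ T 0 v) (hmin : ∀ v, ∀ t ∈ T 0 v, m ≤ t) :
    ∀ r, (Finset.univ.filter fun v => m ∈ T r v) ≠ Finset.univ →
      (Finset.univ.filter fun v => m ∈ T r v).card + 1 ≤
        (Finset.univ.filter fun v => m ∈ T (r + 1) v).card := by
  classical
  -- m is below every token at every round
  have hminall : ∀ r v, ∀ t ∈ T r v, m ≤ t := by
    intro r
    induction r with
    | zero => exact hmin
    | succ r ih =>
      intro v t ht
      rw [hT r v, Finset.mem_union] at ht
      rcases ht with h | h
      · exact ih v t h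
      · simp only [Finset.mem_biUnion] at h
        obtain ⟨w, -, hw⟩ := h
        split_ifs at hw with hne
        · simp only [Finset.mem_singleton] at hw
          subst hw
          exact ih w _ (Finset.min'_mem _ hne)
        · simp at hw
  -- knowledge is monotone
  have hmono : ∀ r v, m ∈ T r v → m ∈ T (r + 1) v := by
    intro r v h
    rw [hT r v, Finset.mem_union]
    exact Or.inl h
  have hknow : ∀ s, ∃ v, m ∈ T s v := by
    intro s
    induction s with
    | zero => exact hm
    | succ s ih => obtain ⟨v0, hv0⟩ := ih; exact ⟨v0, hmono s v0 hv0⟩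
  intro r hne
  set K := Finset.univ.filter fun v => m ∈ T r v with hK
  -- K is nonempty
  have hKne : K.Nonempty := by
    obtain ⟨v0, hv0⟩ := hknow r
    exact ⟨v0, by simp [hK, hv0]⟩
  obtain ⟨a, ha⟩ := hKne
  -- some node not in K
  obtain ⟨b, hb⟩ : ∃ b, b ∉ K := by
    by_contra h
    push_neg at h
    exact hne (Finset.eq_univ_iff_forall.2 h)
  have haK : m ∈ T r a := (Finset.mem_filter.1 ha).2
  have hbK : m ∉ T r b := fun h => hb (Finset.mem_filter.2 ⟨Finset.mem_univ _, h⟩)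
  -- find boundary dart in E (r+1)
  obtain ⟨p⟩ := (hconn (r + 1)) a b
  obtain ⟨d, -, hd1, hd2⟩ := p.exists_boundary_dart {v | m ∈ T r v} haK hbK
  have hadj : (E (r + 1)).Adj d.fst d.snd := d.adj
  -- d.snd learns m
  have hsnd : m ∈ T (r + 1) d.snd := by
    rw [hT r d.snd, Finset.mem_union]
    right
    rw [Finset.mem_biUnion]
    refine ⟨d.fst, by simp [hadj], ?_⟩
    have hne' : (T r d.fst).Nonempty := ⟨m, hd1⟩
    rw [dif_pos hne', Finset.mem_singleton]
    exact le_antisymm (Finset.le_min' _ _ _ (fun t ht => hminall r d.fst t ht))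
      (Finset.min'_le _ _ hd1)
  -- conclude via insert
  have hsub : insert d.snd K ⊆ Finset.univ.filter fun v => m ∈ T (r + 1) v := by
    intro x hx
    rcases Finset.mem_insert.1 hx with rfl | hx
    · exact Finset.mem_filter.2 ⟨Finset.mem_univ _, hsnd⟩
    · exact Finset.mem_filter.2 ⟨Finset.mem_univ _, hmono r x (Finset.mem_filter.1 hx).2⟩
  have hnotin : d.snd ∉ K := fun h => hd2 (Finset.mem_filter.1 h).2
  calc K.card + 1 = (insert d.snd K).card := (Finset.card_insert_of_notMem hnotin).symm
    _ ≤ _ := Finset.card_le_card hsub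
end

section
/- In a T-interval connected dynamic graph, pipelined broadcast of the T smallest tokens over one stable period succeeds: if a connected subgraph G' persists for 2T consecutive rounds and every node broadcasts, each round, the smallest token it knows that it has not yet broadcast in the current period, then every node within distance T (in G') of a node knowing token q learns q by the end of the period, provided q is among the T smallest tokens overall. -/
/-- Pipelined broadcast of the `T` smallest tokens over one stable period:
if the connected graph `G` persists for `2T` rounds, nodes broadcast each round the
smallest known token not yet broadcast this period (sets `A` of known and `S` of
broadcast tokens, `S 0 = ∅`), all tokens come from a global pool `P`, and `q` is among
the `T` smallest tokens of `P`, then every node `u` within distance `T` of a node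
initially knowing `q` knows `q` at the end of the period (after `2T` rounds). -/
theorem pipelined_broadcast_period {V τ : Type*} [Fintype V] [LinearOrder τ]
    (G : SimpleGraph V) [DecidableRel G.Adj] (hG : G.Connected)
    (T : ℕ) (A S : ℕ → V → Finset τ)
    (hS0 : ∀ u, S 0 u = ∅)
    (hS : ∀ r u, S (r + 1) u = S r u ∪
      (if h : (A r u \ S r u).Nonempty then {(A r u \ S r u).min' h} else ∅))
    (hA : ∀ r u, A (r + 1) u = A r u ∪
      (G.neighborFinset u).biUnion (fun w =>
        if h : (A r w \ S r w).Nonempty then {(A r w \ S r w).min' h} else ∅))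
    (P : Finset τ) (hP : ∀ r u, A r u ⊆ P)
    (q : τ) (hq : (P.filter (· < q)).card < T)
    (u : V) (hd : ∃ w, q ∈ A 0 w ∧ G.dist u w ≤ T) :
    q ∈ A (2 * T) u := by
  obtain ⟨w, hw0, hdw⟩ := hd
  -- monotonicity of A and S
  have hAmono : ∀ r v, A r v ⊆ A (r + 1) v := by
    intro r v; rw [hA]; exact Finset.subset_union_left
  have hSmono : ∀ r v, S r v ⊆ S (r + 1) v := by
    intro r v; rw [hS]; exact Finset.subset_union_left
  have hA0 : ∀ r v, A 0 v ⊆ A r v := by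
    intro r v
    induction r with
    | zero => exact subset_rfl
    | succ r ih => exact ih.trans (hAmono r v)
  -- S is contained in A
  have hSA : ∀ r v, S r v ⊆ A r v := by
    intro r v
    induction r with
    | zero => simp [hS0]
    | succ r ih =>
      rw [hS]
      apply Finset.union_subset (ih.trans (hAmono r v))
      split_ifs with h
      · intro x hx
        rw [Finset.mem_singleton] at hx
        subst hx
        exact hAmono r v (Finset.mem_sdiff.mp ((A r v \ S r v).min'_mem h)).1
      · simp
  -- tokens broadcast by a neighbor are known
  have hSnbr : ∀ r v v', G.Adj v v' → S r v' ⊆ A r v := by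
    intro r v v' hadj
    induction r with
    | zero => simp [hS0]
    | succ r ih =>
      rw [hS, hA]
      apply Finset.union_subset (ih.trans Finset.subset_union_left)
      intro x hx
      apply Finset.mem_union_right
      rw [Finset.mem_biUnion]
      exact ⟨v', (G.mem_neighborFinset v v').mpr hadj, hx⟩
  -- one-round progress lemma
  have hstep : ∀ r v k, (q ∈ A r v ∨ k + 1 ≤ ((A r v).filter (· < q)).card) →
      k ≤ ((S r v).filter (· < q)).card →
      q ∈ S (r + 1) v ∨ k + 1 ≤ ((S (r + 1) v).filter (· < q)).card := by
    intro r v k hside hk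
    by_cases hqS : q ∈ S r v
    · exact Or.inl (hSmono r v hqS)
    by_cases hk1 : k + 1 ≤ ((S r v).filter (· < q)).card
    · exact Or.inr (hk1.trans (Finset.card_le_card
        (Finset.filter_subset_filter _ (hSmono r v))))
    -- find a witness in A r v \ S r v which is ≤ q
    have hwit : ∃ t ∈ A r v \ S r v, t ≤ q := by
      rcases hside with hqA | hcA
      · exact ⟨q, Finset.mem_sdiff.mpr ⟨hqA, hqS⟩, le_rfl⟩
      · have hsub : (S r v).filter (· < q) ⊆ (A r v).filter (· < q) :=
          Finset.filter_subset_filter _ (hSA r v)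
        have hns : ¬ (A r v).filter (· < q) ⊆ (S r v).filter (· < q) := by
          intro h
          have := Finset.card_le_card h
          omega
        obtain ⟨t, htA, htS⟩ := Finset.not_subset.mp hns
        rw [Finset.mem_filter] at htA
        refine ⟨t, Finset.mem_sdiff.mpr ⟨htA.1, fun h => htS ?_⟩, htA.2.le⟩
        exact Finset.mem_filter.mpr ⟨h, htA.2⟩
    obtain ⟨t, htmem, htq⟩ := hwit
    have hne : (A r v \ S r v).Nonempty := ⟨t, htmem⟩
    set m := (A r v \ S r v).min' hne with hm
    have hmle : m ≤ q := le_trans ((A r v \ S r v).min'_le t htmem) htq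
    have hmmem : m ∈ A r v \ S r v := (A r v \ S r v).min'_mem hne
    have hSnew : S (r + 1) v = S r v ∪ {m} := by rw [hS, dif_pos hne]
    rcases eq_or_lt_of_le hmle with hmq | hmq
    · left; rw [hSnew, ← hmq]; simp
    · right
      have hmnotS : m ∉ (S r v).filter (· < q) := by
        intro h
        exact (Finset.mem_sdiff.mp hmmem).2 (Finset.mem_filter.mp h).1
      have hins : insert m ((S r v).filter (· < q)) ⊆ (S (r + 1) v).filter (· < q) := by
        intro x hx
        rw [Finset.mem_insert] at hx
        rcases hx with rfl | hx
        · exact Finset.mem_filter.mpr ⟨by rw [hSnew]; simp, hmq⟩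
        · exact Finset.filter_subset_filter _ (hSmono r v) hx
      calc k + 1 ≤ ((S r v).filter (· < q)).card + 1 := by omega
        _ = (insert m ((S r v).filter (· < q))).card :=
            (Finset.card_insert_of_notMem hmnotS).symm
        _ ≤ _ := Finset.card_le_card hins
  -- shortest path neighbor
  have hnbr : ∀ (v : V) (d : ℕ), G.dist v w = d + 1 →
      ∃ v', G.Adj v v' ∧ G.dist v' w ≤ d := by
    intro v d h
    obtain ⟨p, hp⟩ := (hG v w).exists_walk_length_eq_dist
    rw [h] at hp
    cases p with
    | nil => simp at hp
    | cons hadj p' =>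
      refine ⟨_, hadj, ?_⟩
      have := SimpleGraph.dist_le p'
      simp [SimpleGraph.Walk.length_cons] at hp
      omega
  -- key invariant
  have key : ∀ r (v : V), G.dist v w ≤ r →
      q ∈ S r v ∨ r - G.dist v w ≤ ((S r v).filter (· < q)).card := by
    intro r
    induction r with
    | zero => intro v _; right; simp
    | succ r ih =>
      intro v hvw
      by_cases hdr : G.dist v w ≤ r
      · rcases ih v hdr with hqS | hcount
        · exact Or.inl (hSmono r v hqS)
        · have hside : q ∈ A r v ∨ (r - G.dist v w) + 1 ≤ ((A r v).filter (· < q)).card := by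
            rcases Nat.eq_zero_or_pos (G.dist v w) with hd0 | hdpos
            · have hvweq : v = w := hG.dist_eq_zero_iff.mp hd0
              subst hvweq
              exact Or.inl (hA0 r v hw0)
            · obtain ⟨v', hadj, hv'w⟩ := hnbr v (G.dist v w - 1) (by omega)
              rcases ih v' (by omega) with hqS' | hc'
              · exact Or.inl (hSnbr r v v' hadj hqS')
              · right
                have hle : S r v' ⊆ A r v := hSnbr r v v' hadj
                calc (r - G.dist v w) + 1 ≤ r - G.dist v' w := by omega
                  _ ≤ ((S r v').filter (· < q)).card := hc'
                  _ ≤ _ := Finset.card_le_card (Finset.filter_subset_filter _ hle)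
          rcases hstep r v (r - G.dist v w) hside hcount with h | h
          · exact Or.inl h
          · right
            calc r + 1 - G.dist v w = (r - G.dist v w) + 1 := by omega
              _ ≤ _ := h
      · right
        have : r + 1 - G.dist v w = 0 := by omega
        simp [this]
  -- conclude
  rcases key (2 * T) u (by omega) with hqS | hcount
  · exact hSA _ u hqS
  · exfalso
    have hsub : (S (2 * T) u).filter (· < q) ⊆ P.filter (· < q) :=
      Finset.filter_subset_filter _ ((hSA _ u).trans (hP _ u))
    have := Finset.card_le_card hsub
    omega
end

section
/- Each queue request is enqueued exactly once: in the abstract queuing protocol where the successor variable of each node takes values in {⊥, ∞} ∪ UIDs, initially succ = ∞ everywhere except succ_head = ⊥, and in each cycle the unique node u with succ_u = ⊥ sets succ_u to the UID t of the enqueued request while node t's variable changes from ∞ to ⊥ only after receiving the corresponding cancel, there is at all times at most one node with succ = ⊥, and no node's successor variable is ever overwritten after being set to a UID. -/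
/-- Correctness invariants of the abstract queuing protocol.  Each node's successor
variable lives in `WithBot (WithTop V)`, where `⊥` plays the role of ⊥ (tail), `⊤`
plays the role of ∞ (not enqueued), and embedded elements of `V` are UIDs.  Initially
only `head` has value `⊥` and everyone else has `⊤`.  In each step either nothing
happens, or the node `u` with value `⊥` sets its variable to the UID `t` of a node with
value `⊤` (an enqueue), or — when no node has value `⊥` — the just-enqueued node `t`
(pointed to by some node, still holding `⊤`) sets its variable to `⊥` upon receiving
the cancel message.  Then: (1) at every time there is at most one node with value `⊥`;
(2) once a successor variable holds a UID it never changes; (3) each request (UID)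
appears as the successor of at most one node, i.e. it is enqueued at most once. -/
theorem queuing_protocol_invariants {V : Type*} [DecidableEq V] (head : V)
    (succ : ℕ → V → WithBot (WithTop V))
    (h0head : succ 0 head = ⊥)
    (h0 : ∀ v, v ≠ head → succ 0 v = ((⊤ : WithTop V) : WithBot (WithTop V)))
    (hstep : ∀ i, succ (i + 1) = succ i ∨
      (∃ u t : V, succ i u = ⊥ ∧ succ i t = ((⊤ : WithTop V) : WithBot (WithTop V)) ∧
        succ (i + 1) = Function.update (succ i) u ((t : WithTop V) : WithBot (WithTop V))) ∨
      (∃ u t : V, (∀ w, succ i w ≠ ⊥) ∧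
        succ i u = ((t : WithTop V) : WithBot (WithTop V)) ∧
        succ i t = ((⊤ : WithTop V) : WithBot (WithTop V)) ∧
        succ (i + 1) = Function.update (succ i) t ⊥)) :
    (∀ i u w, succ i u = ⊥ → succ i w = ⊥ → u = w) ∧
    (∀ i j v (t : V), i ≤ j → succ i v = ((t : WithTop V) : WithBot (WithTop V)) →
        succ j v = ((t : WithTop V) : WithBot (WithTop V))) ∧
    (∀ i u w (t : V), succ i u = ((t : WithTop V) : WithBot (WithTop V)) →
        succ i w = ((t : WithTop V) : WithBot (WithTop V)) → u = w) := by
  -- persistence of UID values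
  have pers : ∀ i j v (t : V), i ≤ j → succ i v = ((t : WithTop V) : WithBot (WithTop V)) →
      succ j v = ((t : WithTop V) : WithBot (WithTop V)) := by
    intro i j v t hij hv
    induction j, hij using Nat.le_induction with
    | base => exact hv
    | succ j hij ih =>
      rcases hstep j with heq | ⟨u, s, hu, hs, heq⟩ | ⟨u, s, hnb, hu, hs, heq⟩
      · rw [heq]; exact ih
      · rw [heq, Function.update_apply]
        split_ifs with h
        · subst h; rw [ih] at hu; exact absurd hu (by simp)
        · exact ih
      · rw [heq, Function.update_apply]
        split_ifs with h
        · subst h; rw [ih] at hs; exact absurd hs (by simp)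
        · exact ih
  -- combined invariant
  have key : ∀ i,
      (∀ u w, succ i u = ⊥ → succ i w = ⊥ → u = w) ∧
      (∀ u w (t : V), succ i u = ((t : WithTop V) : WithBot (WithTop V)) →
        succ i w = ((t : WithTop V) : WithBot (WithTop V)) → u = w) ∧
      (∀ w (t : V), succ i w = ((t : WithTop V) : WithBot (WithTop V)) →
        succ i t = ((⊤ : WithTop V) : WithBot (WithTop V)) →
        (∀ v, succ i v ≠ ⊥) ∧
        ∀ w' (t' : V), succ i w' = ((t' : WithTop V) : WithBot (WithTop V)) →
          succ i t' = ((⊤ : WithTop V) : WithBot (WithTop V)) → t = t') := by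
    intro i
    induction i with
    | zero =>
      have hno : ∀ v (t : V), succ 0 v ≠ ((t : WithTop V) : WithBot (WithTop V)) := by
        intro v t hv
        rcases eq_or_ne v head with rfl | h
        · rw [h0head] at hv; exact absurd hv (by simp)
        · rw [h0 v h] at hv; exact absurd hv (by simp)
      refine ⟨?_, ?_, ?_⟩
      · intro u w hu hw
        have hu' : u = head := by
          by_contra h; rw [h0 u h] at hu; exact absurd hu WithBot.coe_ne_bot
        have hw' : w = head := by
          by_contra h; rw [h0 w h] at hw; exact absurd hw WithBot.coe_ne_bot
        rw [hu', hw']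
      · intro u w t hu _; exact absurd hu (hno u t)
      · intro w t hw _; exact absurd hw (hno w t)
    | succ i ih =>
      obtain ⟨ibot, iinj, ipend⟩ := ih
      rcases hstep i with heq | ⟨u, t, hu, ht, heq⟩ | ⟨u, t, hnb, hu, ht, heq⟩
      · rw [heq]; exact ⟨ibot, iinj, ipend⟩
      · -- enqueue step
        have htu : t ≠ u := by intro h; rw [h, hu] at ht; exact absurd ht.symm WithBot.coe_ne_bot
        -- no pending pair at time i (since u holds ⊥)
        have hnopend : ∀ w (s : V), succ i w = ((s : WithTop V) : WithBot (WithTop V)) →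
            succ i s ≠ ((⊤ : WithTop V) : WithBot (WithTop V)) := by
          intro w s hw hs
          exact (ipend w s hw hs).1 u hu
        refine ⟨?_, ?_, ?_⟩
        · -- at most one ⊥ : in fact none
          intro v w hv hw
          exfalso
          rw [heq, Function.update_apply] at hv
          split_ifs at hv with h
          · exact absurd hv (by simp)
          · have := ibot v u hv hu
            exact h this
        · -- UID injectivity
          intro v w s hv hw
          rw [heq, Function.update_apply] at hv hw
          split_ifs at hv hw with h1 h2 h2
          · rw [h1, h2]
          · -- v = u, so s = t, and w (≠ u) had succ i w = ↑↑t, pending pair, contra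
            exfalso
            have hst : s = t := by
              have : ((t : WithTop V) : WithBot (WithTop V)) = ((s : WithTop V) : WithBot (WithTop V)) := hv
              exact_mod_cast this.symm
            rw [hst] at hw
            exact hnopend w t hw ht
          · exfalso
            have hst : s = t := by
              have : ((t : WithTop V) : WithBot (WithTop V)) = ((s : WithTop V) : WithBot (WithTop V)) := hw
              exact_mod_cast this.symm
            rw [hst] at hv
            exact hnopend v t hv ht
          · exact iinj v w s hv hw
        · -- pending pair analysis at i+1
          intro w s hw hs
          -- first show any pending pair at i+1 has s = t
          have hpair : ∀ w' (s' : V),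
              succ (i+1) w' = ((s' : WithTop V) : WithBot (WithTop V)) →
              succ (i+1) s' = ((⊤ : WithTop V) : WithBot (WithTop V)) → s' = t := by
            intro w' s' hw' hs'
            rw [heq, Function.update_apply] at hw' hs'
            split_ifs at hs' with h2
            · exfalso; exact absurd hs' (by simp)
            · split_ifs at hw' with h1
              · exact_mod_cast (hw'.symm : ((s' : WithTop V) : WithBot (WithTop V)) = _)
              · exact absurd hs' (hnopend w' s' hw')
          refine ⟨?_, ?_⟩
          · intro v hv
            rw [heq, Function.update_apply] at hv
            split_ifs at hv with h
            · exact absurd hv (by simp)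
            · exact h (ibot v u hv hu)
          · intro w' s' hw' hs'
            rw [hpair w s hw hs, hpair w' s' hw' hs']
      · -- dequeue / cancel step
        have hnopend' : ∀ w (s : V), succ (i+1) w = ((s : WithTop V) : WithBot (WithTop V)) →
            succ (i+1) s ≠ ((⊤ : WithTop V) : WithBot (WithTop V)) := by
          intro w s hw hs
          rw [heq, Function.update_apply] at hw hs
          split_ifs at hw with h1
          · exact absurd hw (by simp)
          split_ifs at hs with h2
          · exact absurd hs.symm WithBot.coe_ne_bot
          · -- pending pair (w,s) at time i with s ≠ t, but t is the unique pending node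
            have := (ipend u t hu ht).2 w s hw hs
            exact h2 this.symm
        refine ⟨?_, ?_, ?_⟩
        · intro v w hv hw
          rw [heq, Function.update_apply] at hv hw
          split_ifs at hv hw with h1 h2 h2
          · rw [h1, h2]
          · exact absurd hw (hnb w)
          · exact absurd hv (hnb v)
          · exact absurd hv (hnb v)
        · intro v w s hv hw
          rw [heq, Function.update_apply] at hv hw
          split_ifs at hv hw with h1 h2 h2
          · exact absurd hv (by simp)
          · exact absurd hv (by simp)
          · exact absurd hw (by simp)
          · exact iinj v w s hv hw
        · intro w s hw hs
          exact absurd hs (hnopend' w s hw)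
  exact ⟨fun i => (key i).1, pers, fun i => (key i).2.1⟩
end

section
/- The successor pointers form a path (a total order): under the invariants of the abstract queuing protocol, after k enqueue operations the relation {(u, succ_u) : succ_u ∈ V} is the edge set of a simple directed path starting at the head node and visiting k+1 distinct nodes, so following successors from the head yields a total order on the enqueued requests. -/
/-- The successor pointers form a path: in the abstract queuing protocol (successor
values in `WithBot (WithTop V)` with `⊥` for the tail marker, `⊤` for ∞, and embedded
elements of `V` for UIDs), each of the `k` enqueue operations picks the unique node `u`
with value `⊥` and a fresh node `t` with value `⊤`, sets `succ u := t` and then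
`succ t := ⊥`.  After `k` enqueues, the pairs `(u, succ u)` with `succ u` a UID form the
edge set of a simple directed path `head → t₁ → ⋯ → t_k` on `k + 1` distinct nodes. -/
theorem successor_pointers_form_path {V : Type*} [DecidableEq V] (head : V) (k : ℕ)
    (succ : ℕ → V → WithBot (WithTop V))
    (h0head : succ 0 head = ⊥)
    (h0 : ∀ v, v ≠ head → succ 0 v = ((⊤ : WithTop V) : WithBot (WithTop V)))
    (hstep : ∀ i < k, ∃ u t : V, succ i u = ⊥ ∧
      succ i t = ((⊤ : WithTop V) : WithBot (WithTop V)) ∧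
      succ (i + 1) = Function.update
        (Function.update (succ i) u ((t : WithTop V) : WithBot (WithTop V))) t ⊥) :
    ∃ c : Fin (k + 1) → V, Function.Injective c ∧ c 0 = head ∧
      ∀ u t : V, succ k u = ((t : WithTop V) : WithBot (WithTop V)) ↔
        ∃ j : Fin k, u = c j.castSucc ∧ t = c j.succ := by
  suffices H : ∀ i ≤ k, ∃ c : ℕ → V,
      (∀ a ≤ i, ∀ b ≤ i, c a = c b → a = b) ∧ c 0 = head ∧
      (∀ v, succ i v = ⊥ ↔ v = c i) ∧
      (∀ u t : V, succ i u = ((t : WithTop V) : WithBot (WithTop V)) ↔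
        ∃ j < i, u = c j ∧ t = c (j + 1)) by
    obtain ⟨c, hinj, hc0, _, hedge⟩ := H k le_rfl
    refine ⟨fun j => c j.val, ?_, hc0, ?_⟩
    · intro a b h
      exact Fin.ext (hinj a.val (Nat.lt_succ_iff.mp a.isLt) b.val
        (Nat.lt_succ_iff.mp b.isLt) h)
    · intro u t
      rw [hedge]
      constructor
      · rintro ⟨j, hj, hu, ht⟩
        exact ⟨⟨j, hj⟩, hu, ht⟩
      · rintro ⟨j, hu, ht⟩
        exact ⟨j.val, j.isLt, hu, ht⟩
  intro i
  induction i with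
  | zero =>
    intro _
    refine ⟨fun _ => head, ?_, rfl, ?_, ?_⟩
    · intro a ha b hb _
      omega
    · intro v
      constructor
      · intro hv
        by_contra hne
        rw [h0 v hne] at hv
        exact WithBot.coe_ne_bot hv
      · rintro rfl; exact h0head
    · intro u t
      constructor
      · intro hu
        by_cases hne : u = head
        · subst hne; rw [h0head] at hu; exact (WithBot.bot_ne_coe hu).elim
        · rw [h0 u hne] at hu
          exact (WithTop.top_ne_coe (WithBot.coe_injective hu)).elim
      · rintro ⟨j, hj, _, _⟩; omega
  | succ i ih =>
    intro hik
    obtain ⟨c, hinj, hc0, hbot, hedge⟩ := ih (Nat.le_of_succ_le hik)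
    obtain ⟨u, t, hu, ht, hsucc⟩ := hstep i hik
    have huc : u = c i := (hbot u).mp hu
    have hunt : u ≠ t := by
      intro h; rw [h, ht] at hu; exact WithBot.coe_ne_bot hu
    have htfresh : ∀ a ≤ i, c a ≠ t := by
      intro a ha h
      rcases Nat.lt_or_eq_of_le ha with ha | ha
      · have : succ i (c a) = ((c (a+1) : WithTop V) : WithBot (WithTop V)) :=
          (hedge (c a) (c (a+1))).mpr ⟨a, ha, rfl, rfl⟩
        rw [h, ht] at this
        exact WithTop.top_ne_coe (WithBot.coe_injective this)
      · have : succ i (c a) = ⊥ := (hbot (c a)).mpr (by rw [ha])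
        rw [h, ht] at this
        exact WithBot.coe_ne_bot this
    refine ⟨Function.update c (i+1) t, ?_, ?_, ?_, ?_⟩
    · intro a ha b hb hab
      rcases Nat.lt_or_eq_of_le ha with ha' | rfl <;>
        rcases Nat.lt_or_eq_of_le hb with hb' | rfl
      · have ha'' : a ≤ i := Nat.lt_succ_iff.mp ha'
        have hb'' : b ≤ i := Nat.lt_succ_iff.mp hb'
        rw [Function.update_of_ne (by omega), Function.update_of_ne (by omega)] at hab
        exact hinj a ha'' b hb'' hab
      · rw [Function.update_of_ne (by omega), Function.update_self] at hab
        exact absurd hab (htfresh a (by omega))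
      · rw [Function.update_self, Function.update_of_ne (by omega)] at hab
        exact absurd hab.symm (htfresh b (by omega))
      · rfl
    · rw [Function.update_of_ne (by omega)]; exact hc0
    · intro v
      rw [hsucc, Function.update_self]
      by_cases hvt : v = t
      · subst hvt; simp
      · rw [Function.update_of_ne hvt]
        constructor
        · intro hv
          by_cases hvu : v = u
          · subst hvu; rw [Function.update_self] at hv
            exact absurd hv (WithBot.coe_ne_bot)
          · rw [Function.update_of_ne hvu] at hv
            have := (hbot v).mp hv
            rw [← huc] at this
            exact absurd this hvu
        · intro hv
          exact absurd hv hvt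
    · intro a b
      rw [hsucc]
      constructor
      · intro h
        by_cases hat : a = t
        · subst hat; rw [Function.update_self] at h
          exact absurd h WithBot.bot_ne_coe
        · rw [Function.update_of_ne hat] at h
          by_cases hau : a = u
          · subst hau
            rw [Function.update_self] at h
            have hbt : b = t :=
              (WithTop.coe_injective (WithBot.coe_injective h)).symm
            refine ⟨i, Nat.lt_succ_self i, ?_, ?_⟩
            · rw [Function.update_of_ne (by omega)]; exact huc
            · rw [Function.update_self]; exact hbt
          · rw [Function.update_of_ne hau] at h
            obtain ⟨j, hj, rfl, rfl⟩ := (hedge a b).mp h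
            refine ⟨j, by omega, ?_, ?_⟩
            · rw [Function.update_of_ne (by omega)]
            · rw [Function.update_of_ne (by omega)]
      · rintro ⟨j, hj, rfl, rfl⟩
        rcases Nat.lt_or_eq_of_le (Nat.lt_succ_iff.mp hj) with hj' | rfl
        · rw [Function.update_of_ne (show j ≠ i+1 by omega),
            Function.update_of_ne (show j+1 ≠ i+1 by omega)]
          have hcjt : c j ≠ t := htfresh j (by omega)
          have hcju : c j ≠ u := by
            rw [huc]; intro h
            exact absurd (hinj j (by omega) i le_rfl h) (by omega)
          rw [Function.update_of_ne hcjt, Function.update_of_ne hcju]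
          exact (hedge (c j) (c (j+1))).mpr ⟨j, hj', rfl, rfl⟩
        · rw [Function.update_of_ne (show j ≠ j+1 by omega), Function.update_self]
          rw [← huc, Function.update_of_ne hunt, Function.update_self]
end

section
/- In a c-vertex-connected dynamic graph (every round's graph is c-vertex connected), flooding informs at least c new nodes per round while uninformed nodes remain: if K(r) is the set of informed nodes with ∅ ≠ K(r) and |V \ K(r)| ≥ c, then |K(r+1)| ≥ |K(r)| + c; consequently flooding completes in at most ⌈(n−1)/c⌉ + 1 rounds. -/
/-- A graph on a finite vertex set is `c`-vertex connected if it has more than `c`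
vertices and remains connected after removing any fewer than `c` vertices. -/
def IsCVertexConnected {V : Type*} [Fintype V] (G : SimpleGraph V) (c : ℕ) : Prop :=
  c < Fintype.card V ∧
    ∀ S : Finset V, S.card < c → (G.induce ((↑S : Set V)ᶜ)).Connected

private lemma walk_cross {V : Type*} (G : SimpleGraph V) (A : Set V) :
    ∀ {x y : V} (_ : G.Walk x y), x ∈ A → y ∉ A →
      ∃ w v, w ∈ A ∧ v ∉ A ∧ G.Adj w v := by
  intro x y p
  induction p with
  | nil => exact fun hx hy => absurd hx hy
  | @cons a b y h p ih =>
    intro hx hy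
    by_cases hb : b ∈ A
    · exact ih hb hy
    · exact ⟨a, b, hx, hb, h⟩

private lemma boundary_big {V : Type*} [Fintype V] {G : SimpleGraph V} {c : ℕ}
    (h : IsCVertexConnected G c) {A : Set V} (hA : A.Nonempty)
    (hB : {v | v ∉ A ∧ ∃ w ∈ A, G.Adj w v}.ncard < c)
    (hrest : (Aᶜ \ {v | v ∉ A ∧ ∃ w ∈ A, G.Adj w v}).Nonempty) : False := by
  classical
  set B := {v | v ∉ A ∧ ∃ w ∈ A, G.Adj w v} with hBdef
  have hBfin : B.Finite := Set.toFinite _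
  obtain ⟨S, hScoe, hScard⟩ : ∃ S : Finset V, (↑S : Set V) = B ∧ S.card < c :=
    ⟨hBfin.toFinset, hBfin.coe_toFinset, by
      rw [← Set.ncard_eq_toFinset_card B hBfin]; exact hB⟩
  have hconn := h.2 S hScard
  obtain ⟨a, ha⟩ := hA
  obtain ⟨z, hz⟩ := hrest
  have haB : a ∈ (↑S : Set V)ᶜ := by
    rw [hScoe]; intro hmem; exact hmem.1 ha
  have hzB : z ∈ (↑S : Set V)ᶜ := by rw [hScoe]; exact hz.2
  obtain ⟨p⟩ := hconn.preconnected ⟨a, haB⟩ ⟨z, hzB⟩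
  obtain ⟨w, v, hw, hv, hadj⟩ :=
    walk_cross (G.induce ((↑S : Set V)ᶜ)) {x | (x : V) ∈ A} p ha hz.1.elim
  have hvB : (v : V) ∈ B := ⟨hv, ⟨w, hw, hadj⟩⟩
  rw [← hScoe] at hvB
  exact v.2 hvB

/-- Flooding in a dynamic graph that is `c`-vertex connected in every round informs at
least `c` new nodes per round while at least `c` nodes remain uninformed; consequently
flooding started at a single node completes within `⌈(n-1)/c⌉ + 1` rounds. -/
theorem c_connected_flooding {V : Type*} [Fintype V] (c : ℕ) (hc : 0 < c)
    (E : ℕ → SimpleGraph V) (hconn : ∀ r, IsCVertexConnected (E r) c)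
    (u : V) (K : ℕ → Set V)
    (hK0 : K 0 = {u})
    (hstep : ∀ r, K (r + 1) = K r ∪ {v | ∃ w ∈ K r, (E (r + 1)).Adj w v}) :
    (∀ r, c ≤ (K r)ᶜ.ncard → (K r).ncard + c ≤ (K (r + 1)).ncard) ∧
    (∀ r, (Fintype.card V - 1 + c - 1) / c + 1 ≤ r → K r = Set.univ) := by
  classical
  have hmono : ∀ r, K r ⊆ K (r + 1) := fun r => by
    rw [hstep r]; exact Set.subset_union_left
  have hne : ∀ r, (K r).Nonempty := by
    intro r
    induction r with
    | zero => rw [hK0]; exact ⟨u, rfl⟩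
    | succ n ih => exact ih.mono (hmono n)
  -- K (r+1) as a disjoint union
  have hunion : ∀ r, K (r + 1) =
      K r ∪ {v | v ∉ K r ∧ ∃ w ∈ K r, (E (r + 1)).Adj w v} := by
    intro r
    rw [hstep r]
    ext v
    by_cases hv : v ∈ K r <;> simp [hv]
  have hcard_step : ∀ r, (K (r + 1)).ncard =
      (K r).ncard + {v | v ∉ K r ∧ ∃ w ∈ K r, (E (r + 1)).Adj w v}.ncard := by
    intro r
    rw [hunion r]
    exact Set.ncard_union_eq (Set.disjoint_left.mpr fun a ha h => h.1 ha)
      (Set.toFinite _) (Set.toFinite _)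
  have part1 : ∀ r, c ≤ (K r)ᶜ.ncard → (K r).ncard + c ≤ (K (r + 1)).ncard := by
    intro r hcomp
    rw [hcard_step r]
    have hBc : c ≤ {v | v ∉ K r ∧ ∃ w ∈ K r, (E (r + 1)).Adj w v}.ncard := by
      by_contra hlt
      push_neg at hlt
      apply boundary_big (hconn (r + 1)) (hne r) hlt
      -- the complement minus boundary is nonempty
      set B := {v | v ∉ K r ∧ ∃ w ∈ K r, (E (r + 1)).Adj w v} with hBdef
      have hsub : B ⊆ (K r)ᶜ := fun v hv => hv.1
      have hneq : B ≠ (K r)ᶜ := by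
        intro h
        rw [h] at hlt
        omega
      obtain ⟨x, hx1, hx2⟩ := Set.exists_of_ssubset (hsub.ssubset_of_ne hneq)
      exact ⟨x, hx1, hx2⟩
    omega
  refine ⟨part1, ?_⟩
  have key : ∀ r, K r = Set.univ ∨ 1 + r * c ≤ (K r).ncard := by
    intro r
    induction r with
    | zero =>
      right
      rw [hK0, Set.ncard_singleton]
      omega
    | succ n ih =>
      rcases ih with h | h
      · left
        exact Set.eq_univ_of_univ_subset (h ▸ hmono n)
      · by_cases hcomp : c ≤ (K n)ᶜ.ncard
        · right
          have := part1 n hcomp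
          calc 1 + (n + 1) * c = (1 + n * c) + c := by ring
          _ ≤ (K n).ncard + c := by omega
          _ ≤ (K (n + 1)).ncard := this
        · push_neg at hcomp
          rcases Set.eq_empty_or_nonempty (K n)ᶜ with hemp | hnon
          · left
            have : K n = Set.univ := by
              rw [← Set.compl_empty_iff]; exact hemp
            exact Set.eq_univ_of_univ_subset (this ▸ hmono n)
          · left
            set B := {v | v ∉ K n ∧ ∃ w ∈ K n, (E (n + 1)).Adj w v} with hBdef
            have hsub : B ⊆ (K n)ᶜ := fun v hv => hv.1
            have hBlt : B.ncard < c :=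
              lt_of_le_of_lt (Set.ncard_le_ncard hsub (Set.toFinite _)) hcomp
            have hBeq : B = (K n)ᶜ := by
              by_contra hneq
              obtain ⟨x, hx1, hx2⟩ := Set.exists_of_ssubset (hsub.ssubset_of_ne hneq)
              exact boundary_big (hconn (n + 1)) (hne n) hBlt ⟨x, hx1, hx2⟩
            rw [hunion n, ← hBdef, hBeq, Set.union_compl_self]
  intro r hr
  set m := (Fintype.card V - 1 + c - 1) / c with hm
  have hmc : Fintype.card V - 1 ≤ m * c := by
    have h1 : m * c + (Fintype.card V - 1 + c - 1) % c
        = Fintype.card V - 1 + c - 1 := by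
      rw [hm]; exact Nat.div_add_mod' _ _
    have h2 : (Fintype.card V - 1 + c - 1) % c < c := Nat.mod_lt _ hc
    omega
  have hKm : K m = Set.univ := by
    rcases key m with h | h
    · exact h
    · have hle : (K m).ncard ≤ Fintype.card V := by
        simpa [Set.ncard_univ, Nat.card_eq_fintype_card] using
          Set.ncard_le_ncard (Set.subset_univ (K m)) (Set.toFinite _)
      have hcard : Fintype.card V ≤ (K m).ncard := by
        have hn : 0 < Fintype.card V := lt_of_le_of_lt (Nat.zero_le c) (hconn 0).1
        omega
      apply Set.eq_of_subset_of_ncard_le (Set.subset_univ _) _ (Set.toFinite _)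
      simpa [Set.ncard_univ, Nat.card_eq_fintype_card] using hcard
  have hmono' : ∀ a b, a ≤ b → K a ⊆ K b := by
    intro a b hab
    induction b with
    | zero => simp_all
    | succ n ih =>
      rcases Nat.lt_or_ge a (n + 1) with h | h
      · exact (ih (Nat.lt_succ_iff.mp h)).trans (hmono n)
      · have : a = n + 1 := le_antisymm hab h
        subst this; rfl
  exact Set.eq_univ_of_univ_subset (hKm ▸ hmono' m r (by omega))
end

section
/- In the pipelined broadcast invariant, if node u has distance d to the nearest knower of token q in the stable graph G' and r satisfies d ≤ r ≤ 2T, then after round r of the period either u has broadcast q, or u has broadcast at least r − d tokens each smaller than q. -/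
set_option maxHeartbeats 1000000


/-- Pipelined broadcast invariant over a stable connected graph `G`:
`A r u` is the set of tokens node `u` knows and `S r u` the set of tokens `u` has
broadcast in the current period, after `r` rounds (`S 0 u = ∅`); each round every node
broadcasts the smallest known token not yet broadcast this period.  If `u` is at
distance at most `d` (in `G`) from a node initially knowing token `q`, then for every
round `r` with `d ≤ r ≤ 2T`, after `r` rounds either `u` has broadcast `q`, or `u` has
broadcast at least `r - d` tokens smaller than `q`. -/
theorem pipelined_broadcast_invariant {V τ : Type*} [Fintype V] [LinearOrder τ]
    (G : SimpleGraph V) [DecidableRel G.Adj] (hG : G.Connected)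
    (T : ℕ) (A S : ℕ → V → Finset τ)
    (hS0 : ∀ u, S 0 u = ∅)
    (hS : ∀ r u, S (r + 1) u = S r u ∪
      (if h : (A r u \ S r u).Nonempty then {(A r u \ S r u).min' h} else ∅))
    (hA : ∀ r u, A (r + 1) u = A r u ∪
      (G.neighborFinset u).biUnion (fun w =>
        if h : (A r w \ S r w).Nonempty then {(A r w \ S r w).min' h} else ∅))
    (q : τ) (u : V) (d : ℕ)
    (hd : ∃ w, q ∈ A 0 w ∧ G.dist u w ≤ d) :
    ∀ r, d ≤ r → r ≤ 2 * T →
      q ∈ S r u ∨ r - d ≤ ((S r u).filter (· < q)).card := by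
  -- basic monotonicity facts
  have hSmono : ∀ r u, S r u ⊆ S (r + 1) u := fun r u => by
    rw [hS]; exact Finset.subset_union_left
  have hAmono : ∀ r u, A r u ⊆ A (r + 1) u := fun r u => by
    rw [hA]; exact Finset.subset_union_left
  have hA0 : ∀ r u, A 0 u ⊆ A r u := by
    intro r
    induction r with
    | zero => intro u; exact subset_rfl
    | succ n ih => intro u; exact (ih u).trans (hAmono n u)
  -- tokens broadcast by a neighbor are known
  have hL2 : ∀ r u w, G.Adj u w → S r w ⊆ A r u := by
    intro r
    induction r with
    | zero => intro u w _; rw [hS0]; exact Finset.empty_subset _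
    | succ n ih =>
      intro u w hadj
      rw [hS n w, hA n u]
      apply Finset.union_subset
      · exact (ih u w hadj).trans Finset.subset_union_left
      · intro x hx
        refine Finset.mem_union_right _ (Finset.mem_biUnion.mpr ⟨w, ?_, hx⟩)
        exact (SimpleGraph.mem_neighborFinset G u w).mpr hadj
  -- in each round either a new token smaller than q is broadcast, or all known
  -- tokens smaller than q were already broadcast
  have hL3 : ∀ r u, (∃ t, t < q ∧ t ∉ S r u ∧ t ∈ S (r + 1) u) ∨
      (A r u).filter (· < q) ⊆ S r u := by
    intro r u
    by_cases h : (A r u \ S r u).Nonempty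
    · by_cases hmq : (A r u \ S r u).min' h < q
      · left
        refine ⟨(A r u \ S r u).min' h, hmq,
          (Finset.mem_sdiff.mp ((A r u \ S r u).min'_mem h)).2, ?_⟩
        rw [hS, dif_pos h]
        exact Finset.mem_union_right _ (Finset.mem_singleton_self _)
      · right
        intro t ht
        simp only [Finset.mem_filter] at ht
        by_contra htS
        exact hmq (lt_of_le_of_lt
          (Finset.min'_le _ t (Finset.mem_sdiff.mpr ⟨ht.1, htS⟩)) ht.2)
    · right
      intro t ht
      simp only [Finset.mem_filter] at ht
      by_contra htS
      exact h ⟨t, Finset.mem_sdiff.mpr ⟨ht.1, htS⟩⟩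
  -- a new small broadcast token increases the count
  have hinc : ∀ r u k, k ≤ ((S r u).filter (· < q)).card →
      (∃ t, t < q ∧ t ∉ S r u ∧ t ∈ S (r + 1) u) →
      k + 1 ≤ ((S (r + 1) u).filter (· < q)).card := by
    rintro r u k hk ⟨t, htq, htn, hti⟩
    have hsub : insert t ((S r u).filter (· < q)) ⊆ (S (r + 1) u).filter (· < q) := by
      intro x hx
      rcases Finset.mem_insert.mp hx with rfl | hx
      · exact Finset.mem_filter.mpr ⟨hti, htq⟩
      · have hx' := Finset.mem_filter.mp hx
        exact Finset.mem_filter.mpr ⟨hSmono r u hx'.1, hx'.2⟩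
    have htnm : t ∉ (S r u).filter (· < q) := fun hx => htn (Finset.mem_filter.mp hx).1
    calc k + 1 ≤ ((S r u).filter (· < q)).card + 1 := by omega
      _ = (insert t ((S r u).filter (· < q))).card :=
          (Finset.card_insert_of_notMem htnm).symm
      _ ≤ _ := Finset.card_le_card hsub
  -- the key step when q is already known
  have hstep : ∀ r u d, d ≤ r → q ∈ A r u →
      (q ∈ S r u ∨ r - d ≤ ((S r u).filter (· < q)).card) →
      (q ∈ S (r + 1) u ∨ r + 1 - d ≤ ((S (r + 1) u).filter (· < q)).card) := by
    intro r u d hdr hq ih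
    by_cases hqS : q ∈ S (r + 1) u
    · exact Or.inl hqS
    have hqSr : q ∉ S r u := fun h => hqS (hSmono r u h)
    rcases ih with h | h
    · exact absurd h hqSr
    rcases hL3 r u with hnew | hsub
    · right
      have := hinc r u (r - d) h hnew
      omega
    · exfalso
      have hne : (A r u \ S r u).Nonempty := ⟨q, Finset.mem_sdiff.mpr ⟨hq, hqSr⟩⟩
      have hmin := (A r u \ S r u).min'_mem hne
      have hle : (A r u \ S r u).min' hne ≤ q :=
        Finset.min'_le _ q (Finset.mem_sdiff.mpr ⟨hq, hqSr⟩)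
      rcases lt_or_eq_of_le hle with hlt | heq
      · exact (Finset.mem_sdiff.mp hmin).2
          (hsub (Finset.mem_filter.mpr ⟨(Finset.mem_sdiff.mp hmin).1, hlt⟩))
      · apply hqS
        rw [hS, dif_pos hne]
        exact Finset.mem_union_right _ (by simp [heq])
  -- main induction
  have main : ∀ r, ∀ u d, (∃ w, q ∈ A 0 w ∧ G.dist u w ≤ d) → d ≤ r →
      q ∈ S r u ∨ r - d ≤ ((S r u).filter (· < q)).card := by
    intro r
    induction r with
    | zero => intro u d _ _; right; simp
    | succ n ih =>
      intro u d hw hdr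
      by_cases hdn : d ≤ n
      swap
      · right
        have hde : d = n + 1 := by omega
        simp [hde]
      obtain ⟨w, hqw, hdw⟩ := hw
      cases d with
      | zero =>
        have huw : u = w := by
          have h0 : G.dist u w = 0 := Nat.le_zero.mp hdw
          have := hG.preconnected u w
          rcases (SimpleGraph.dist_eq_zero_iff_eq_or_not_reachable).mp h0 with h | h
          · exact h
          · exact absurd this h
        have hqA : q ∈ A n u := hA0 n u (huw ▸ hqw)
        exact hstep n u 0 (Nat.zero_le n) hqA
          (ih u 0 ⟨w, hqw, hdw⟩ (Nat.zero_le n))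
      | succ d' =>
        by_cases hdw' : G.dist u w ≤ d'
        · rcases ih u d' ⟨w, hqw, hdw'⟩ (by omega) with h | h
          · exact Or.inl (hSmono n u h)
          · right
            have := Finset.card_le_card
              (Finset.filter_subset_filter (· < q) (hSmono n u))
            omega
        · have hdeq : G.dist u w = d' + 1 := le_antisymm hdw (by omega)
          obtain ⟨p, hp⟩ := (hG.preconnected u w).exists_walk_length_eq_dist
          rw [hdeq] at hp
          cases p with
          | nil => simp at hp
          | @cons _ u' _ hadj p' =>
            have hdist' : G.dist u' w ≤ d' := by
              have := SimpleGraph.dist_le p'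
              simp [SimpleGraph.Walk.length_cons] at hp
              omega
            rcases ih u' d' ⟨w, hqw, hdist'⟩ (by omega) with h | h
            · have hqA : q ∈ A n u := hL2 n u u' hadj h
              exact hstep n u (d' + 1) hdn hqA
                (ih u (d' + 1) ⟨w, hqw, hdw⟩ hdn)
            · by_cases hqS : q ∈ S (n + 1) u
              · exact Or.inl hqS
              rcases hL3 n u with hnew | hsub
              · right
                rcases ih u (d' + 1) ⟨w, hqw, hdw⟩ hdn with h2 | h2
                · exact absurd (hSmono n u h2) hqS
                · have := hinc n u (n - (d' + 1)) h2 hnew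
                  omega
              · right
                have h1 : (S n u').filter (· < q) ⊆ (A n u).filter (· < q) :=
                  Finset.filter_subset_filter _ (hL2 n u u' hadj)
                have h2 : (A n u).filter (· < q) ⊆ (S n u).filter (· < q) := by
                  intro x hx
                  exact Finset.mem_filter.mpr ⟨hsub hx, (Finset.mem_filter.mp hx).2⟩
                have h3 : (S n u).filter (· < q) ⊆ (S (n + 1) u).filter (· < q) :=
                  Finset.filter_subset_filter _ (hSmono n u)
                have := Finset.card_le_card ((h1.trans h2).trans h3)
                omega
  intro r hdr _
  exact main r u d hd hdr
end
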